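/- Let R' and R'' be R-cross-sections of the semigroup IS_m ≀_p IS_n and let φ: R' → R'' be a semigroup isomorphism. Then there exists an element Θ = (ϑ, θ) of the wreath product S_m ≀ S_n (i.e. a permutation θ of N_n and a function ϑ from N_n to the symmetric group S_m) such that φ((f,a)) = Θ^{-1}(f,a)Θ for all (f,a) ∈ R'. Explicitly: if (g,b) = φ((f,a)), then dom(b) = θ(dom(a)); for every x ∈ dom(a), (xa)θ = (xθ)b; and for every x ∈ dom(a), g(xθ) = ϑ(x)^{-1} f(x) ϑ(xa). -/

import Mathlib

/-!
An R-class of `IS m ≀_p IS n` is determined by its domain data: `dom a` together with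
`dom f(x)` for `x ∈ dom a`, an element of `Fin n → WithBot (Set (Fin m))`; and `u` lies in
`vS` exactly when the data of `u` is pointwise below that of `v`. As an R-cross-section is a
subsemigroup meeting every R-class once, an isomorphism `φ` of R-cross-sections induces an
order automorphism of this poset of data. Such an automorphism permutes the atoms, hence the
coordinates, by some `θ`, and acts on each coordinate `x` by an automorphism of the Boolean
lattice `Set (Fin m)`, that is, by the image under a permutation `ϑ x`. Multiplying `(f, a)` by
the element of `R'` whose data is concentrated at `y = xa` with value `S` gives data
concentrated at `x` with value `f(x)⁻¹(S)`; transporting this through `φ` for every `S` yields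
`(xa)θ = (xθ)b` and `g(xθ) = ϑ(x)⁻¹ f(x) ϑ(xa)`.
-/

open scoped Classical

/-- `IS n` is the full inverse symmetric semigroup: all partial bijections of `Fin n`;
multiplication is composition of partial maps (maps acting on the right). -/
abbrev IS (n : ℕ) : Type := PEquiv (Fin n) (Fin n)

noncomputable section
namespace ISW

instance {n : ℕ} : Mul (IS n) := ⟨PEquiv.trans⟩
instance {n : ℕ} : One (IS n) := ⟨PEquiv.refl _⟩

/-- The domain of a partial bijection. -/
def pdom {n : ℕ} (f : IS n) : Set (Fin n) := {x | (f x).isSome}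

/-- The range of a partial bijection. -/
def pran {n : ℕ} (f : IS n) : Set (Fin n) := {y | (f.symm y).isSome}

/-- Green's R-relation on a semigroup (with identity): `u R v` iff `uS = vS`. -/
def GreenR {S : Type*} [Mul S] (u v : S) : Prop :=
  {w | ∃ s, w = u * s} = {w | ∃ s, w = v * s}

/-- Green's L-relation on a semigroup (with identity): `u L v` iff `Su = Sv`. -/
def GreenL {S : Type*} [Mul S] (u v : S) : Prop :=
  {w | ∃ s, w = s * u} = {w | ∃ s, w = s * v}

/-- An R-cross-section: a subsemigroup containing exactly one element of every
Green R-class. -/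
def IsRCrossSection {S : Type*} [Mul S] (T : Set S) : Prop :=
  (∀ a ∈ T, ∀ b ∈ T, a * b ∈ T) ∧ ∀ x : S, ∃! t, t ∈ T ∧ GreenR x t

/-- An L-cross-section: a subsemigroup containing exactly one element of every
Green L-class. -/
def IsLCrossSection {S : Type*} [Mul S] (T : Set S) : Prop :=
  (∀ a ∈ T, ∀ b ∈ T, a * b ∈ T) ∧ ∀ x : S, ∃! t, t ∈ T ∧ GreenL x t

/-- `φ` realizes a semigroup isomorphism from `T₁` onto `T₂`. -/
def IsSemiIso {S₁ S₂ : Type*} [Mul S₁] [Mul S₂] (T₁ : Set S₁) (T₂ : Set S₂)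
    (φ : S₁ → S₂) : Prop :=
  Set.BijOn φ T₁ T₂ ∧ ∀ a ∈ T₁, ∀ b ∈ T₁, φ (a * b) = φ a * φ b

/-- The partial wreath product `IS m ≀_p IS n`: pairs `(f, a)` with `a ∈ IS n` and
`f` a partial map from `Fin n` to `IS m` whose domain equals the domain of `a`. -/
structure PW (m n : ℕ) where
  base : IS n
  fib : Fin n → Option (IS m)
  dom_eq : ∀ x, (fib x).isSome ↔ (base x).isSome

/-- Multiplication of the partial wreath product: `(f,a)·(g,b) = (f g^a, ab)`. -/
instance {m n : ℕ} : Mul (PW m n) where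
  mul u v :=
    { base := u.base * v.base
      fib := fun x => Option.map₂ (· * ·) (u.fib x) ((u.base x).bind v.fib)
      dom_eq := by
        intro x
        show _ ↔ (((u.base x).bind v.base)).isSome
        cases h : u.base x with
        | none =>
          have : u.fib x = none := by
            have := (u.dom_eq x)
            simp [h] at this
            simpa using Option.not_isSome_iff_eq_none.mp (by simp [this])
          simp [h, this, Option.map₂]
        | some y =>
          have hf : (u.fib x).isSome := (u.dom_eq x).mpr (by simp [h])
          obtain ⟨s, hs⟩ := Option.isSome_iff_exists.mp hf
          cases h2 : v.base y with
          | none =>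
            have : v.fib y = none := by
              have := (v.dom_eq y)
              simp [h2] at this
              simpa using Option.not_isSome_iff_eq_none.mp (by simp [this])
            simp [h, h2, hs, this, Option.map₂]
          | some z =>
            have hg : (v.fib y).isSome := (v.dom_eq y).mpr (by simp [h2])
            obtain ⟨t, ht⟩ := Option.isSome_iff_exists.mp hg
            simp [h, h2, hs, ht, Option.map₂] }

/-- The identity of the partial wreath product. -/
instance {m n : ℕ} : One (PW m n) where
  one :=
    { base := 1
      fib := fun _ => some 1
      dom_eq := by intro x; simp; rfl }

/-- `chainFun L j x`: with `L` listing the elements of a block in increasing order and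
`0 ≤ j < |L|` (`j` is the 0-based version of the paper's index), this is the value at `x` of
the chain `a_{i,j}`: the partial bijection with domain everything except `L[j]`,
sending `L[l] ↦ L[l+1]` for `l < j` and fixing all other points. -/
def chainFun {n : ℕ} (L : List (Fin n)) (j : ℕ) (x : Fin n) : Option (Fin n) :=
  if x ∈ L then
    if L.idxOf x = j then none
    else if L.idxOf x < j then L[L.idxOf x + 1]?
    else some x
  else some x

/-- The generators `a_{i,j}` attached to an ordered decomposition with blocks `B i`. -/
def RGens {n s : ℕ} (B : Fin s → List (Fin n)) : Set (IS n) :=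
  {a : IS n | ∃ i : Fin s, ∃ j : ℕ, j < (B i).length ∧ ∀ x, a x = chainFun (B i) j x}

/-- `R(M⃗₁, …, M⃗ₛ)`: the subsemigroup of `IS n` generated by the chains `a_{i,j}`
together with the identity map. -/
def RSec {n s : ℕ} (B : Fin s → List (Fin n)) : Set (IS n) :=
  (Subsemigroup.closure (RGens B ∪ {1}) : Subsemigroup (IS n))

/-- A decomposition of `Fin n` into disjoint nonempty blocks, each block equipped with
a linear order, recorded by listing the elements of each block in increasing order. -/
structure OrderedPartition (n s : ℕ) where
  B : Fin s → List (Fin n)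
  nonempty : ∀ i, B i ≠ []
  nodup : ∀ i, (B i).Nodup
  disjoint : ∀ i j, i ≠ j → ∀ x, x ∈ B i → x ∉ B j
  cover : ∀ x, ∃ i, x ∈ B i

/-- The chain `a_{i,j}` of the block listed by `L`, viewed inside `IS(M_i)`, i.e. embedded
into `IS n` as a partial bijection whose domain is contained in the block: it is defined on
`L` minus `L[j]`, sends `L[l] ↦ L[l+1]` for `l < j` and fixes the other points of `L`. -/
def chainFunB {n : ℕ} (L : List (Fin n)) (j : ℕ) (x : Fin n) : Option (Fin n) :=
  if x ∈ L then
    if L.idxOf x = j then none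
    else if L.idxOf x < j then L[L.idxOf x + 1]?
    else some x
  else none

/-- The generators of `R(M⃗)` inside `IS(M)` (embedded in `IS n`), `M` listed by `L`. -/
def BlockGens {n : ℕ} (L : List (Fin n)) : Set (IS n) :=
  {a : IS n | ∃ j : ℕ, j < L.length ∧ ∀ x, a x = chainFunB L j x}

/-- The identity of `IS(M)` (embedded in `IS n`): the identity map of the block listed by `L`. -/
def idOn {n : ℕ} (L : List (Fin n)) : Set (IS n) :=
  {a : IS n | ∀ x, a x = if x ∈ L then some x else none}

/-- The R-cross-section `R(M⃗)` of `IS(M)`, embedded into `IS n`, for the block listed by `L`. -/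
def RSecBlock {n : ℕ} (L : List (Fin n)) : Set (IS n) :=
  (Subsemigroup.closure (BlockGens L ∪ idOn L) : Subsemigroup (IS n))

/-- The wreath product `R_i ≀_p R(M⃗_i)` where `R(M⃗_i) ⊆ IS(M_i)`, `M_i` listed by `L`,
and `R_i = T ⊆ IS m`, realized inside `PW m n` via the natural embedding
`IS m ≀_p IS(M_i) ⊆ IS m ≀_p IS n`. -/
def WBlock (m n : ℕ) (L : List (Fin n)) (T : Set (IS m)) : Set (PW m n) :=
  {u : PW m n | u.base ∈ RSecBlock L ∧ ∀ x f, u.fib x = some f → f ∈ T}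

/-- The element `e' = (0̄, 1)` of `IS m ≀_p IS n`: the second component is the identity of
`IS n` and the first component sends every point to the empty map `0` of `IS m`. -/
def ezero (m n : ℕ) : PW m n where
  base := 1
  fib := fun _ => some ⊥
  dom_eq := by intro x; simp; rfl

end ISW

open Function

theorem WithBot.isAtom_iff_eq_coe_bot {β : Type*} [PartialOrder β] [OrderBot β]
    {a : WithBot β} : IsAtom a ↔ a = ↑(⊥ : β) := by
  rw [← bot_covBy_iff]
  cases a with
  | bot => simp
  | coe b => rw [WithBot.bot_covBy_coe, isMin_iff_eq_bot, WithBot.coe_inj]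

theorem WithBot.coe_bot_le_iff_ne_bot {β : Type*} [Preorder β] [OrderBot β] {w : WithBot β} :
    ((⊥ : β) : WithBot β) ≤ w ↔ w ≠ ⊥ := by
  cases w <;> simp

theorem OrderIso.apply_coe_ne_bot {γ δ : Type*} [PartialOrder γ] [PartialOrder δ]
    (τ : WithBot γ ≃o WithBot δ) (a : γ) : τ a ≠ ⊥ := fun h =>
  WithBot.coe_ne_bot (τ.injective (h.trans τ.map_bot.symm))

theorem OrderIso.exists_eq_withBotCongr {γ δ : Type*} [PartialOrder γ] [PartialOrder δ]
    (τ : WithBot γ ≃o WithBot δ) : ∃ σ : γ ≃o δ, τ = σ.withBotCongr := by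
  let σ : γ ≃o δ :=
    { toFun a := (τ a).unbot (τ.apply_coe_ne_bot a)
      invFun b := (τ.symm b).unbot (τ.symm.apply_coe_ne_bot b)
      left_inv a := by simp
      right_inv b := by simp
      map_rel_iff' := fun {a b} => by
        change (τ a).unbot _ ≤ (τ b).unbot _ ↔ a ≤ b
        rw [← WithBot.coe_le_coe, WithBot.coe_unbot, WithBot.coe_unbot, τ.le_iff_le,
          WithBot.coe_le_coe] }
  refine ⟨σ, OrderIso.ext (funext fun v => ?_)⟩
  cases v with
  | bot => simp
  | coe a => exact (WithBot.coe_unbot _ _).symm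

theorem OrderIso.exists_apply_singleton_eq {α β : Type*} (σ : Set α ≃o Set β) (p : α) :
    ∃ q, σ {p} = {q} :=
  Set.isAtom_iff.mp ((σ.isAtom_iff _).mpr (Set.isAtom_singleton p))

theorem OrderIso.exists_apply_eq_image {α β : Type*} (σ : Set α ≃o Set β) :
    ∃ e : α ≃ β, ∀ s, σ s = e '' s := by
  choose f hf using σ.exists_apply_singleton_eq
  choose g hg using σ.symm.exists_apply_singleton_eq
  have hgf : LeftInverse g f := fun p => by
    have h := σ.symm_apply_apply {p}
    rwa [hf, hg, Set.singleton_eq_singleton_iff] at h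
  have hfg : RightInverse g f := fun q => by
    have h := σ.apply_symm_apply {q}
    rwa [hg, hf, Set.singleton_eq_singleton_iff] at h
  refine ⟨⟨f, g, hgf, hfg⟩, fun s => Set.ext fun q => ?_⟩
  rw [Equiv.image_eq_preimage_symm, Set.mem_preimage, ← Set.singleton_subset_iff,
    ← Set.singleton_subset_iff]
  exact σ.symm_apply_le.symm.trans (by rw [hg]; rfl)

section PiWithBot

variable {ι β : Type*} [DecidableEq ι]

theorem eq_of_update_bot_coe_eq {x y : ι} {b c : β}
    (h : update (⊥ : ι → WithBot β) x ↑b = update ⊥ y ↑c) : x = y := by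
  by_contra hxy
  simpa [hxy] using congrFun h x

theorem update_bot_le_iff [Preorder β] {x : ι} {v : WithBot β} {d : ι → WithBot β} :
    update ⊥ x v ≤ d ↔ v ≤ d x := by
  simp [update_le_iff]

variable [PartialOrder β] [OrderBot β]

theorem isAtom_pi_withBot_iff {a : ι → WithBot β} :
    IsAtom a ↔ ∃ x, a = update ⊥ x ↑(⊥ : β) := by
  simp [Pi.isAtom_iff_eq_single, WithBot.isAtom_iff_eq_coe_bot]

namespace OrderIso

variable (Ψ : (ι → WithBot β) ≃o (ι → WithBot β))

theorem exists_apply_update_coe_bot (x : ι) :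
    ∃ y, Ψ (update ⊥ x ↑(⊥ : β)) = update ⊥ y ↑(⊥ : β) :=
  isAtom_pi_withBot_iff.mp ((Ψ.isAtom_iff _).mpr (isAtom_pi_withBot_iff.mpr ⟨x, rfl⟩))

theorem exists_perm_apply_update_coe_bot :
    ∃ θ : Equiv.Perm ι, ∀ x, Ψ (update ⊥ x ↑(⊥ : β)) = update ⊥ (θ x) ↑(⊥ : β) := by
  choose f hf using Ψ.exists_apply_update_coe_bot
  choose g hg using Ψ.symm.exists_apply_update_coe_bot
  refine ⟨⟨f, g, fun x => ?_, fun y => ?_⟩, hf⟩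
  · have h := congrArg Ψ.symm (hf x)
    rw [Ψ.symm_apply_apply, hg] at h
    exact (eq_of_update_bot_coe_eq h).symm
  · have h := congrArg Ψ (hg y)
    rw [Ψ.apply_symm_apply, hf] at h
    exact (eq_of_update_bot_coe_eq h).symm

/-- Another atom below the image of the column of `x` would pull back to an atom below that
column, i.e. to the atom of `x`. -/
theorem apply_update_eq_update {x y : ι}
    (hxy : Ψ (update ⊥ x ↑(⊥ : β)) = update ⊥ y ↑(⊥ : β)) (v : WithBot β) :
    Ψ (update ⊥ x v) = update ⊥ y (Ψ (update ⊥ x v) y) := by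
  funext z
  rcases eq_or_ne z y with rfl | hzy
  · simp
  rw [update_of_ne hzy]
  by_contra hne
  have hz : update ⊥ z ↑(⊥ : β) ≤ Ψ (update ⊥ x v) :=
    update_bot_le_iff.mpr (WithBot.coe_bot_le_iff_ne_bot.mpr hne)
  obtain ⟨w, hw⟩ := Ψ.symm.exists_apply_update_coe_bot z
  rw [← Ψ.symm_apply_le, hw, update_bot_le_iff] at hz
  have hwx : w = x := by
    by_contra hwx
    simp [update_of_ne hwx] at hz
  rw [hwx, Ψ.symm_apply_eq, hxy] at hw
  exact hzy (eq_of_update_bot_coe_eq hw)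

theorem exists_perm_apply_update :
    ∃ θ : Equiv.Perm ι, ∃ τ : ι → WithBot β ≃o WithBot β,
      ∀ x v, Ψ (update ⊥ x v) = update ⊥ (θ x) (τ x v) := by
  obtain ⟨θ, hθ⟩ := Ψ.exists_perm_apply_update_coe_bot
  have hcol := fun x => Ψ.apply_update_eq_update (hθ x)
  have hcol' := fun x => Ψ.symm.apply_update_eq_update (Ψ.symm_apply_eq.mpr (hθ x).symm)
  refine ⟨θ, fun x =>
    { toFun v := Ψ (update ⊥ x v) (θ x)
      invFun w := Ψ.symm (update ⊥ (θ x) w) x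
      left_inv v := by dsimp only; rw [← hcol x v, Ψ.symm_apply_apply, update_self]
      right_inv w := by dsimp only; rw [← hcol' x w, Ψ.apply_symm_apply, update_self]
      map_rel_iff' := fun {v w} => by
        change Ψ (update ⊥ x v) (θ x) ≤ Ψ (update ⊥ x w) (θ x) ↔ v ≤ w
        rw [← update_le_update_iff' (x := (⊥ : ι → WithBot β)) (i := θ x), ← hcol, ← hcol,
          Ψ.le_iff_le, update_le_update_iff'] }, fun x v => hcol x v⟩

theorem exists_perm_apply_eq :
    ∃ θ : Equiv.Perm ι, ∃ τ : ι → WithBot β ≃o WithBot β, ∀ d x, Ψ d (θ x) = τ x (d x) := by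
  obtain ⟨θ, τ, h⟩ := Ψ.exists_perm_apply_update
  refine ⟨θ, τ, fun d x => eq_of_forall_le_iff fun w => ?_⟩
  obtain ⟨v, rfl⟩ := (τ x).surjective w
  rw [← update_bot_le_iff, ← h, Ψ.le_iff_le, update_bot_le_iff, (τ x).le_iff_le]

end OrderIso

end PiWithBot

theorem OrderIso.exists_perm_apply_eq_image {ι α : Type*} [DecidableEq ι]
    (Ψ : (ι → WithBot (Set α)) ≃o (ι → WithBot (Set α))) :
    ∃ θ : Equiv.Perm ι, ∃ ϑ : ι → Equiv.Perm α, ∀ d x, Ψ d (θ x) = (d x).map (ϑ x '' ·) := by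
  obtain ⟨θ, τ, h⟩ := Ψ.exists_perm_apply_eq
  choose σ hσ using fun x => (τ x).exists_eq_withBotCongr
  choose ϑ hϑ using fun x => (σ x).exists_apply_eq_image
  refine ⟨θ, ϑ, fun d x => ?_⟩
  rw [h, hσ, OrderIso.withBotCongr_apply, show ⇑(σ x) = (ϑ x '' ·) from funext (hϑ x)]

namespace ISW

section Green

variable {S : Type*}

theorem GreenR.symm [Mul S] {u v : S} (h : GreenR u v) : GreenR v u := Eq.symm h

theorem greenR_of_mul_eq [Semigroup S] {u v a b : S} (ha : u * a = v) (hb : v * b = u) :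
    GreenR u v := by
  ext z
  constructor
  · rintro ⟨s, rfl⟩
    exact ⟨b * s, by rw [← hb, mul_assoc]⟩
  · rintro ⟨s, rfl⟩
    exact ⟨a * s, by rw [← ha, mul_assoc]⟩

theorem GreenR.mul_left [Semigroup S] {u v : S} (h : GreenR u v) (a : S) :
    GreenR (a * u) (a * v) := by
  have key : ∀ {u' v' : S}, GreenR u' v' → ∀ s, ∃ s', a * u' * s = a * v' * s' := by
    intro u' v' h s
    unfold GreenR at h
    obtain ⟨s', hs'⟩ : u' * s ∈ {w | ∃ s, w = v' * s} := h ▸ ⟨s, rfl⟩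
    exact ⟨s', by rw [mul_assoc, hs', mul_assoc]⟩
  ext z
  constructor
  · rintro ⟨s, rfl⟩
    exact key h s
  · rintro ⟨s, rfl⟩
    exact key h.symm s

theorem IsRCrossSection.eq_of_greenR [Mul S] {T : Set S} (hT : IsRCrossSection T) {t t' : S}
    (ht : t ∈ T) (ht' : t' ∈ T) (h : GreenR t t') : t = t' :=
  (hT.2 t).unique ⟨ht, rfl⟩ ⟨ht', h⟩

theorem IsRCrossSection.exists_mem_mul_eq [Semigroup S] {T : Set S} (hT : IsRCrossSection T)
    {t t' w : S} (ht : t ∈ T) (ht' : t' ∈ T) (h : t = t' * w) : ∃ s ∈ T, t = t' * s := by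
  obtain ⟨s, ⟨hs, hws⟩, -⟩ := hT.2 w
  exact ⟨s, hs, hT.eq_of_greenR ht (hT.1 t' ht' s hs) (h ▸ hws.mul_left t')⟩

theorem IsSemiIso.invFunOn {S₁ S₂ : Type*} [Mul S₁] [Mul S₂] [Nonempty S₁] {T₁ : Set S₁}
    {T₂ : Set S₂} {φ : S₁ → S₂} (hφ : IsSemiIso T₁ T₂ φ) (hT₁ : ∀ a ∈ T₁, ∀ b ∈ T₁, a * b ∈ T₁) :
    IsSemiIso T₂ T₁ (Function.invFunOn φ T₁) := by
  have hinv := hφ.1.invOn_invFunOn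
  have hbij := hφ.1.symm hinv.symm
  refine ⟨hbij, fun a ha b hb => ?_⟩
  have ha' := hbij.mapsTo ha
  have hb' := hbij.mapsTo hb
  calc Function.invFunOn φ T₁ (a * b)
      = Function.invFunOn φ T₁ (φ (Function.invFunOn φ T₁ a * Function.invFunOn φ T₁ b)) := by
        rw [hφ.2 _ ha' _ hb', hinv.2 ha, hinv.2 hb]
    _ = _ := hinv.1 (hT₁ _ ha' _ hb')

end Green

variable {m n : ℕ}

instance : Monoid (IS m) where
  mul_assoc := PEquiv.trans_assoc
  one_mul := PEquiv.refl_trans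
  mul_one := PEquiv.trans_refl

def ppreimage (f : IS m) (S : Set (Fin m)) : Set (Fin m) := {p | ∃ q ∈ S, f p = some q}

theorem ppreimage_subset_pdom (f : IS m) (S : Set (Fin m)) : ppreimage f S ⊆ pdom f := by
  rintro p ⟨q, -, hq⟩
  simp [pdom, hq]

theorem pdom_mul (f g : IS m) : pdom (f * g) = ppreimage f (pdom g) := by
  ext p
  change ((f p).bind g).isSome ↔ _
  cases hp : f p <;> simp [ppreimage, pdom, hp, Option.isSome_iff_exists]

theorem pdom_ofSet (S : Set (Fin m)) : pdom (PEquiv.ofSet S) = S := by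
  ext p
  by_cases hp : p ∈ S <;> simp [pdom, PEquiv.ofSet, hp]

theorem mul_symm_mul_of_pdom_subset {f g : IS m} (h : pdom g ⊆ pdom f) :
    f * (f.symm * g) = g := by
  ext p q
  change ((f p).bind fun r => (f.symm r).bind g) = some q ↔ _
  cases hp : f p with
  | none =>
    have hg : g p = none :=
      Option.not_isSome_iff_eq_none.mp fun hg => by simpa [pdom, hp] using h hg
    simp [hg]
  | some r => simp [f.eq_some_iff.mpr hp]

theorem apply_eq_map_of_ppreimage_image {f g : IS m} {e₁ e₂ : Equiv.Perm (Fin m)}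
    (h : ∀ S, ppreimage g (e₂ '' S) = e₁ '' ppreimage f S) (w : Fin m) :
    g w = (f (e₁⁻¹ w)).map e₂ := by
  refine Option.ext fun r => ?_
  obtain ⟨q, rfl⟩ := e₂.surjective r
  have := Set.ext_iff.mp (h {q}) w
  simp only [ppreimage, Set.image_singleton, Set.mem_singleton_iff, exists_eq_left,
    Set.mem_ofPred_eq, Set.mem_image_equiv] at this
  simpa only [Equiv.Perm.coe_inv, Option.map_eq_some_iff, e₂.injective.eq_iff,
    exists_eq_right] using this

namespace PW

theorem ext {u v : PW m n} (hb : u.base = v.base) (hf : u.fib = v.fib) : u = v := by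
  cases u; cases v; simp_all

theorem mul_base (u v : PW m n) (x : Fin n) : (u * v).base x = (u.base x).bind v.base := rfl

theorem mul_fib (u v : PW m n) (x : Fin n) :
    (u * v).fib x = Option.map₂ (· * ·) (u.fib x) ((u.base x).bind v.fib) := rfl

theorem fib_eq_none_iff {u : PW m n} {x : Fin n} : u.fib x = none ↔ u.base x = none := by
  simpa using (u.dom_eq x).not

theorem exists_fib_eq_some {u : PW m n} {x y : Fin n} (h : u.base x = some y) :
    ∃ f, u.fib x = some f :=
  Option.isSome_iff_exists.mp ((u.dom_eq x).mpr (by simp [h]))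

theorem base_one (x : Fin n) : (1 : PW m n).base x = some x := rfl

theorem fib_one (x : Fin n) : (1 : PW m n).fib x = some 1 := rfl

protected theorem one_mul (u : PW m n) : 1 * u = u := by
  refine ext (PEquiv.refl_trans _) (funext fun x => ?_)
  cases hf : u.fib x <;> simp [mul_fib, base_one, fib_one, hf]

protected theorem mul_one (u : PW m n) : u * 1 = u := by
  refine ext (PEquiv.trans_refl _) (funext fun x => ?_)
  cases hb : u.base x with
  | none => simp [mul_fib, hb, fib_eq_none_iff.mpr hb]
  | some y =>
    obtain ⟨f, hf⟩ := exists_fib_eq_some hb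
    simp [mul_fib, hb, hf, fib_one]

protected theorem mul_assoc (u v w : PW m n) : u * v * w = u * (v * w) := by
  refine ext (PEquiv.trans_assoc _ _ _) (funext fun x => ?_)
  simp only [mul_fib, mul_base]
  cases hb : u.base x with
  | none => simp [fib_eq_none_iff.mpr hb]
  | some y =>
    obtain ⟨f, hf⟩ := exists_fib_eq_some hb
    cases hb' : v.base y with
    | none => simp [hf, hb', fib_eq_none_iff.mpr hb']
    | some z =>
      obtain ⟨g, hg⟩ := exists_fib_eq_some hb'
      cases w.fib z <;> simp [hf, hg, hb', _root_.mul_assoc, Function.comp_def]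

instance : Monoid (PW m n) where
  mul_assoc := PW.mul_assoc
  one_mul := PW.one_mul
  mul_one := PW.mul_one

def leftDiv (u v : PW m n) : PW m n where
  base := u.base.symm.trans v.base
  fib y := (u.base.symm y).bind fun x => Option.map₂ (fun f g => f.symm * g) (u.fib x) (v.fib x)
  dom_eq y := by
    change _ ↔ ((u.base.symm y).bind v.base).isSome
    cases hs : u.base.symm y with
    | none => simp
    | some x =>
      obtain ⟨f, hf⟩ := exists_fib_eq_some (u.base.eq_some_iff.mp hs)
      simpa [hf] using v.dom_eq x

end PW

/-- The value `⊥` at `x` records `x ∉ dom a`. -/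
abbrev DomData (m n : ℕ) : Type := Fin n → WithBot (Set (Fin m))

def domData (u : PW m n) : DomData m n := fun x => WithBot.map pdom (u.fib x)

theorem domData_apply_of_fib_eq {u : PW m n} {x : Fin n} {f : IS m} (hf : u.fib x = some f) :
    domData u x = ↑(pdom f) := by
  simp [domData, hf, WithBot.some_eq_coe]

theorem domData_eq_bot_iff {u : PW m n} {x : Fin n} : domData u x = ⊥ ↔ u.base x = none :=
  WithBot.map_eq_bot_iff.trans PW.fib_eq_none_iff

theorem domData_ne_bot_iff {u : PW m n} {x : Fin n} :
    domData u x ≠ ⊥ ↔ (u.base x).isSome := by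
  rw [Ne, domData_eq_bot_iff, Option.isSome_iff_ne_none]

theorem domData_mul_apply {u : PW m n} {x y : Fin n} {f : IS m} (hb : u.base x = some y)
    (hf : u.fib x = some f) (v : PW m n) :
    domData (u * v) x = (domData v y).map (ppreimage f) := by
  have hfib : (u * v).fib x = (v.fib y).map (f * ·) := by simp [PW.mul_fib, hb, hf]
  simp only [domData, hfib]
  cases v.fib y with
  | none => rfl
  | some g => exact congrArg _ (pdom_mul f g)

theorem PW.base_eq_of_domData_eq_update {u v : PW m n} {x y : Fin n} {S : Set (Fin m)}
    (hv : domData v = update ⊥ y ↑S) (huv : domData (u * v) x ≠ ⊥) : u.base x = some y := by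
  rw [domData_ne_bot_iff, PW.mul_base] at huv
  cases hb : u.base x with
  | none => simp [hb] at huv
  | some y' =>
    rw [hb, Option.bind_some, ← domData_ne_bot_iff, hv] at huv
    by_contra hne
    exact huv (update_of_ne (fun h => hne (congrArg some h)) _ _)

theorem domData_mul_le (u v : PW m n) : domData (u * v) ≤ domData u := by
  intro x
  cases hb : u.base x with
  | none => simp [domData_eq_bot_iff.mpr (show (u * v).base x = none by simp [PW.mul_base, hb])]
  | some y =>
    obtain ⟨f, hf⟩ := PW.exists_fib_eq_some hb
    rw [domData_mul_apply hb hf, domData_apply_of_fib_eq hf]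
    cases domData v y with
    | bot => exact bot_le
    | coe S => exact WithBot.coe_le_coe.mpr (ppreimage_subset_pdom f S)

theorem mul_leftDiv {u v : PW m n} (h : domData v ≤ domData u) : u * u.leftDiv v = v := by
  have hnone : ∀ {x}, u.base x = none → v.base x = none := fun hx =>
    domData_eq_bot_iff.mp (le_bot_iff.mp (domData_eq_bot_iff.mpr hx ▸ h _))
  refine PW.ext (PEquiv.ext fun x => ?_) (funext fun x => ?_)
  · change (u.base x).bind (fun y => (u.base.symm y).bind v.base) = v.base x
    cases hb : u.base x with
    | none => simp [hnone hb]
    | some y => simp [u.base.eq_some_iff.mpr hb]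
  · rw [PW.mul_fib]
    cases hb : u.base x with
    | none => simp [PW.fib_eq_none_iff.mpr hb, PW.fib_eq_none_iff.mpr (hnone hb)]
    | some y =>
      obtain ⟨f, hf⟩ := PW.exists_fib_eq_some hb
      cases hv : v.fib x with
      | none => simp [PW.leftDiv, hf, hv, u.base.eq_some_iff.mpr hb]
      | some g =>
        have hfg : pdom g ⊆ pdom f := by
          simpa [domData_apply_of_fib_eq hf, domData_apply_of_fib_eq hv] using h x
        simp [PW.leftDiv, hf, hv, u.base.eq_some_iff.mpr hb, mul_symm_mul_of_pdom_subset hfg]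

theorem greenR_iff_domData_eq (u v : PW m n) : GreenR u v ↔ domData u = domData v := by
  refine ⟨fun h => le_antisymm ?_ ?_, fun h => ?_⟩
  · obtain ⟨s, hs⟩ : u ∈ {w | ∃ s, w = v * s} := h ▸ ⟨1, (mul_one u).symm⟩
    exact hs ▸ domData_mul_le v s
  · obtain ⟨s, hs⟩ : v ∈ {w | ∃ s, w = u * s} := h.symm ▸ ⟨1, (mul_one v).symm⟩
    exact hs ▸ domData_mul_le u s
  · exact greenR_of_mul_eq (mul_leftDiv h.ge) (mul_leftDiv h.le)

theorem domData_surjective : Function.Surjective (domData : PW m n → DomData m n) := fun d =>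
  ⟨{ base := PEquiv.ofSet {x | d x ≠ ⊥}
     fib x := WithBot.map (fun S => PEquiv.ofSet S) (d x)
     dom_eq x := by cases hx : d x <;> simp [PEquiv.ofSet, hx] <;> rfl },
   funext fun x => by cases hx : d x <;> simp [domData, hx, pdom_ofSet]⟩

theorem IsRCrossSection.exists_mem_domData_eq {T : Set (PW m n)} (hT : IsRCrossSection T)
    (d : DomData m n) : ∃ t ∈ T, domData t = d := by
  obtain ⟨w, rfl⟩ := domData_surjective d
  obtain ⟨t, ⟨ht, hwt⟩, -⟩ := hT.2 w
  exact ⟨t, ht, ((greenR_iff_domData_eq w t).mp hwt).symm⟩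

theorem IsRCrossSection.injOn_domData {T : Set (PW m n)} (hT : IsRCrossSection T) :
    Set.InjOn domData T := fun _ ht _ ht' h =>
  hT.eq_of_greenR ht ht' ((greenR_iff_domData_eq _ _).mpr h)

section Induced

variable {T T₁ T₂ : Set (PW m n)} {φ ψ : PW m n → PW m n}

def inducedMap (T : Set (PW m n)) (φ : PW m n → PW m n) (d : DomData m n) : DomData m n :=
  domData (φ (Function.invFunOn domData T d))

theorem inducedMap_domData (hT : IsRCrossSection T) {t : PW m n} (ht : t ∈ T) :
    inducedMap T φ (domData t) = domData (φ t) := by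
  rw [inducedMap, hT.injOn_domData.leftInvOn_invFunOn ht]

theorem monotone_inducedMap (hT : IsRCrossSection T)
    (hφ : ∀ a ∈ T, ∀ b ∈ T, φ (a * b) = φ a * φ b) : Monotone (inducedMap T φ) := by
  intro d e hde
  obtain ⟨t, ht, rfl⟩ := hT.exists_mem_domData_eq d
  obtain ⟨t', ht', rfl⟩ := hT.exists_mem_domData_eq e
  obtain ⟨s, hs, hts⟩ := hT.exists_mem_mul_eq ht ht' (mul_leftDiv hde).symm
  rw [inducedMap_domData hT ht, inducedMap_domData hT ht', hts, hφ t' ht' s hs]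
  exact domData_mul_le _ _

theorem leftInverse_inducedMap (hT₁ : IsRCrossSection T₁) (hT₂ : IsRCrossSection T₂)
    (hmaps : Set.MapsTo φ T₁ T₂) (hinv : Set.LeftInvOn ψ φ T₁) :
    LeftInverse (inducedMap T₂ ψ) (inducedMap T₁ φ) := by
  intro d
  obtain ⟨t, ht, rfl⟩ := hT₁.exists_mem_domData_eq d
  rw [inducedMap_domData hT₁ ht, inducedMap_domData hT₂ (hmaps ht), hinv ht]

def inducedOrderIso (hT₁ : IsRCrossSection T₁) (hT₂ : IsRCrossSection T₂)
    (hφ : IsSemiIso T₁ T₂ φ) : DomData m n ≃o DomData m n :=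
  have hψ := hφ.invFunOn hT₁.1
  Equiv.toOrderIso
    { toFun := inducedMap T₁ φ
      invFun := inducedMap T₂ (Function.invFunOn φ T₁)
      left_inv := leftInverse_inducedMap hT₁ hT₂ hφ.1.mapsTo hφ.1.invOn_invFunOn.1
      right_inv := leftInverse_inducedMap hT₂ hT₁ hψ.1.mapsTo hφ.1.invOn_invFunOn.2 }
    (monotone_inducedMap hT₁ hφ.2) (monotone_inducedMap hT₂ hψ.2)

theorem inducedOrderIso_domData (hT₁ : IsRCrossSection T₁) (hT₂ : IsRCrossSection T₂)
    (hφ : IsSemiIso T₁ T₂ φ) {t : PW m n} (ht : t ∈ T₁) :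
    inducedOrderIso hT₁ hT₂ hφ (domData t) = domData (φ t) :=
  inducedMap_domData hT₁ ht

end Induced

theorem conj_of_domData_conj {T : Set (PW m n)} (hT : IsRCrossSection T)
    {φ : PW m n → PW m n} (hφ : ∀ a ∈ T, ∀ b ∈ T, φ (a * b) = φ a * φ b)
    {θ : Equiv.Perm (Fin n)} {ϑ : Fin n → Equiv.Perm (Fin m)}
    (hdom : ∀ t ∈ T, ∀ x, domData (φ t) (θ x) = (domData t x).map (ϑ x '' ·))
    {u : PW m n} (hu : u ∈ T) {x y : Fin n} {f : IS m} (hb : u.base x = some y)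
    (hf : u.fib x = some f) :
    (φ u).base (θ x) = some (θ y) ∧
      ∀ g, (φ u).fib (θ x) = some g → ∀ w, g w = (f ((ϑ x)⁻¹ w)).map (ϑ y) := by
  -- multiply `u` by the element of `T` whose domain data is concentrated at `y`, with value `S`
  have htest : ∀ S : Set (Fin m), ∃ v, domData (φ v) = update ⊥ (θ y) ↑(ϑ y '' S) ∧
      domData (φ u * φ v) (θ x) = ↑(ϑ x '' ppreimage f S) := by
    intro S
    obtain ⟨v, hv, hvS⟩ := hT.exists_mem_domData_eq (update ⊥ y ↑S)
    refine ⟨v, funext fun z => ?_, ?_⟩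
    · obtain ⟨z, rfl⟩ := θ.surjective z
      rw [hdom v hv, hvS]
      rcases eq_or_ne z y with rfl | hzy
      · simp
      · rw [update_of_ne hzy, update_of_ne (θ.injective.ne hzy)]
        rfl
    · rw [← hφ u hu v hv, hdom _ (hT.1 u hu v hv), domData_mul_apply hb hf, hvS, update_self]
      rfl
  refine ⟨?_, fun g hg => apply_eq_map_of_ppreimage_image fun S => ?_⟩
  · obtain ⟨v, hv, huv⟩ := htest ∅
    exact PW.base_eq_of_domData_eq_update hv (huv ▸ WithBot.coe_ne_bot)
  · obtain ⟨v, hv, huv⟩ := htest S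
    have hb' := PW.base_eq_of_domData_eq_update hv (huv ▸ WithBot.coe_ne_bot)
    rw [domData_mul_apply hb' hg, hv, update_self, WithBot.map_coe] at huv
    exact WithBot.coe_injective huv

/-- every isomorphism `φ` of R-cross-sections of `IS m ≀_p IS n` is a
conjugacy by an element `Θ = (ϑ, θ)` of `S_m ≀ S_n`: writing `(g,b) = φ((f,a))`,
`dom b = θ(dom a)`, `(x a) θ = (x θ) b`, and `g(x θ) = ϑ(x)⁻¹ f(x) ϑ(x a)`. -/
theorem iso_wreath_rcross_is_conjugacy (m n : ℕ) (R' R'' : Set (PW m n))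
    (hR' : IsRCrossSection R') (hR'' : IsRCrossSection R'')
    (φ : PW m n → PW m n) (hφ : IsSemiIso R' R'' φ) :
    ∃ (θ : Equiv.Perm (Fin n)) (ϑ : Fin n → Equiv.Perm (Fin m)),
      ∀ u ∈ R',
        (∀ x : Fin n, (u.base x).isSome ↔ ((φ u).base (θ x)).isSome) ∧
        (∀ x y : Fin n, u.base x = some y → (φ u).base (θ x) = some (θ y)) ∧
        (∀ x y : Fin n, ∀ f g : IS m, u.base x = some y →
          u.fib x = some f → (φ u).fib (θ x) = some g →
          ∀ w : Fin m, g w = (f ((ϑ x)⁻¹ w)).map (ϑ y)) := by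
  obtain ⟨θ, ϑ, hΨ⟩ := (inducedOrderIso hR' hR'' hφ).exists_perm_apply_eq_image
  have hdom : ∀ t ∈ R', ∀ x, domData (φ t) (θ x) = (domData t x).map (ϑ x '' ·) :=
    fun t ht x => by rw [← inducedOrderIso_domData hR' hR'' hφ ht, hΨ]
  refine ⟨θ, ϑ, fun u hu => ⟨fun x => ?_, fun x y hb => ?_, fun x y f g hb hf hg => ?_⟩⟩
  · rw [← domData_ne_bot_iff, ← domData_ne_bot_iff, hdom u hu, Ne, Ne, WithBot.map_eq_bot_iff]
  · obtain ⟨f, hf⟩ := PW.exists_fib_eq_some hb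
    exact (conj_of_domData_conj hR' hφ.2 hdom hu hb hf).1
  · exact (conj_of_domData_conj hR' hφ.2 hdom hu hb hf).2 g hg

end ISW
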